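/- Let M be a metric space with base point 0 and let μ ∈ F(M) with ‖μ‖ = 1 be such that for every ε > 0 and every slice S = S(f, α) := { ν ∈ B_{F(M)} : f(ν) > 1 − α } (f ∈ S_{Lip₀(M)}, α > 0) containing μ, there exist u ≠ v ∈ M with m_{uv} ∈ S and d(u,v) < ε. Then μ is a Δ-point: for every slice S of B_{F(M)} containing μ and every ε > 0 there exists ν ∈ S with ‖μ − ν‖ ≥ 2 − ε. -/

import Mathlib

/-- An abstract characterization of the Lipschitz-free space `F(M)` over a pointed
metric space `(M, base)`: a normed space `X` together with a map `δ : M → X`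
(the canonical embedding) such that `δ base = 0`, the span of `δ(M)` is dense,
every `1`-Lipschitz function vanishing at the base point extends to a functional of
norm at most one, and every functional of norm at most one induces a `1`-Lipschitz
function on `M`. These properties determine `F(M)` up to isometric isomorphism. -/
structure IsLipschitzFreeSpace (M : Type*) [MetricSpace M] (base : M)
    (X : Type*) [NormedAddCommGroup X] [NormedSpace ℝ X] (δ : M → X) : Prop where
  map_base : δ base = 0
  dense_span : (Submodule.span ℝ (Set.range δ)).topologicalClosure = ⊤
  extend_lipschitz : ∀ g : M → ℝ, LipschitzWith 1 g → g base = 0 →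
    ∃ φ : X →L[ℝ] ℝ, ‖φ‖ ≤ 1 ∧ ∀ p, φ (δ p) = g p
  lipschitz_of_dual : ∀ φ : X →L[ℝ] ℝ, ‖φ‖ ≤ 1 →
    LipschitzWith 1 (fun p => φ (δ p))

/-- The molecule `m_{xy} = (δ_x - δ_y) / d(x,y)`. -/
noncomputable def molecule {M : Type*} [MetricSpace M]
    {X : Type*} [NormedAddCommGroup X] [NormedSpace ℝ X]
    (δ : M → X) (x y : M) : X :=
  (dist x y)⁻¹ • (δ x - δ y)

/-- `μ` is a Daugavet-point: every slice `S(f,α)` of the unit ball contains, for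
every `ε > 0`, an element at distance at least `2 - ε` from `μ`. -/
def IsDaugavetPoint {X : Type*} [NormedAddCommGroup X] [NormedSpace ℝ X]
    (μ : X) : Prop :=
  ∀ f : X →L[ℝ] ℝ, ‖f‖ = 1 → ∀ α : ℝ, 0 < α → ∀ ε : ℝ, 0 < ε →
    ∃ ν : X, ‖ν‖ ≤ 1 ∧ f ν > 1 - α ∧ 2 - ε ≤ ‖μ - ν‖

/-- `μ` is a Δ-point: every slice `S(f,α)` of the unit ball containing `μ`
contains, for every `ε > 0`, an element at distance at least `2 - ε` from `μ`. -/
def IsDeltaPoint {X : Type*} [NormedAddCommGroup X] [NormedSpace ℝ X]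
    (μ : X) : Prop :=
  ∀ f : X →L[ℝ] ℝ, ‖f‖ = 1 → ∀ α : ℝ, 0 < α → f μ > 1 - α →
    ∀ ε : ℝ, 0 < ε → ∃ ν : X, ‖ν‖ ≤ 1 ∧ f ν > 1 - α ∧ 2 - ε ≤ ‖μ - ν‖

/-- `ν` is a denting point of the unit ball: `‖ν‖ ≤ 1` and `ν` belongs to slices of
the unit ball of arbitrarily small diameter. -/
def IsDentingPoint {X : Type*} [NormedAddCommGroup X] [NormedSpace ℝ X]
    (ν : X) : Prop :=
  ‖ν‖ ≤ 1 ∧ ∀ ε : ℝ, 0 < ε → ∃ f : X →L[ℝ] ℝ, ∃ α : ℝ, ‖f‖ = 1 ∧ 0 < α ∧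
    f ν > 1 - α ∧ ∀ w w' : X, ‖w‖ ≤ 1 → f w > 1 - α → ‖w'‖ ≤ 1 → f w' > 1 - α →
      ‖w - w'‖ < ε

/-
For a norm-one `μ`, take a norming functional `F`. Given `u ≠ v` at distance `t`, the
`1`-Lipschitz function `p ↦ min (F δ_p) (F δ_u - 2t + d(p,u))` differs from `F ∘ δ` by at most
`2t` and drops by exactly `t` from `v` to `u`, so it extends to a functional `φ` of norm at
most one with `φ(m_{uv}) = -1`. As `t → 0`, `φ → F` uniformly on `δ(M)`, hence at `μ`, because
`δ(M)` spans a dense subspace and the functionals are bounded. Thus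
`‖μ - m_{uv}‖ ≥ φ(μ) + 1 → 2`, and a slice containing `μ` contains such molecules by hypothesis.
-/

open Submodule

lemma exists_abs_apply_le_mul_of_mem_span {X : Type*} [AddCommGroup X] [Module ℝ X] {s : Set X} {x : X}
    (hx : x ∈ span ℝ s) :
    ∃ C ≥ 0, ∀ (χ : X →ₗ[ℝ] ℝ) (η : ℝ), (∀ y ∈ s, |χ y| ≤ η) → |χ x| ≤ C * η := by
  induction hx using span_induction with
  | mem y hy => exact ⟨1, zero_le_one, fun χ η hχ => by simpa using hχ y hy⟩
  | zero => exact ⟨0, le_rfl, fun χ η _ => by simp⟩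
  | add y z _ _ hy hz =>
    obtain ⟨C, hC, hCy⟩ := hy
    obtain ⟨D, hD, hDz⟩ := hz
    refine ⟨C + D, by positivity, fun χ η hχ => ?_⟩
    calc |χ (y + z)| ≤ |χ y| + |χ z| := by rw [map_add]; exact abs_add_le _ _
      _ ≤ (C + D) * η := by linarith [hCy χ η hχ, hDz χ η hχ]
  | smul a y _ hy =>
    obtain ⟨C, hC, hCy⟩ := hy
    refine ⟨|a| * C, by positivity, fun χ η hχ => ?_⟩
    rw [map_smul, smul_eq_mul, abs_mul, mul_assoc]
    exact mul_le_mul_of_nonneg_left (hCy χ η hχ) (abs_nonneg a)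

lemma exists_forall_abs_apply_le_of_mem_closure_span {X : Type*} [NormedAddCommGroup X] [NormedSpace ℝ X]
    {s : Set X} {x : X} (hx : x ∈ closure (span ℝ s : Set X)) (K : ℝ) {ε : ℝ} (hε : 0 < ε) :
    ∃ η > 0, ∀ χ : X →L[ℝ] ℝ, ‖χ‖ ≤ K → (∀ y ∈ s, |χ y| ≤ η) → |χ x| ≤ ε := by
  obtain ⟨x₀, hx₀, hxx₀⟩ :=
    Metric.mem_closure_iff.mp hx (ε / (2 * (|K| + 1))) (by positivity)
  obtain ⟨C, hC, hCx₀⟩ := exists_abs_apply_le_mul_of_mem_span hx₀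
  refine ⟨ε / (2 * (C + 1)), by positivity, fun χ hχ hχs => ?_⟩
  have h_near : |χ (x - x₀)| ≤ ε / 2 := by
    calc |χ (x - x₀)| ≤ ‖χ‖ * ‖x - x₀‖ := χ.le_opNorm _
      _ ≤ (|K| + 1) * dist x x₀ := by
          rw [dist_eq_norm]
          gcongr
          linarith [le_abs_self K]
      _ ≤ (|K| + 1) * (ε / (2 * (|K| + 1))) := by gcongr
      _ = ε / 2 := by field_simp
  have h_span : |χ x₀| ≤ ε / 2 := by
    calc |χ x₀| ≤ C * (ε / (2 * (C + 1))) := hCx₀ χ _ hχs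
      _ ≤ (C + 1) * (ε / (2 * (C + 1))) := by gcongr; linarith
      _ = ε / 2 := by field_simp
  calc |χ x| = |χ (x - x₀) + χ x₀| := by rw [← map_add, sub_add_cancel]
    _ ≤ |χ (x - x₀)| + |χ x₀| := abs_add_le _ _
    _ ≤ ε := by linarith

lemma LipschitzWith.exists_sub_eq_neg_dist {M : Type*} [MetricSpace M] {f : M → ℝ}
    (hf : LipschitzWith 1 f) (u v : M) :
    ∃ h : M → ℝ, LipschitzWith 1 h ∧ h u - h v = -dist u v ∧
      ∀ p, h p ≤ f p ∧ f p - 2 * dist u v ≤ h p := by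
  set t := dist u v
  have ht : 0 ≤ t := dist_nonneg
  have hf_dist : ∀ p q, f p - f q ≤ dist p q := fun p q =>
    (abs_le.mp (by simpa [Real.dist_eq] using hf.dist_le_mul p q)).2
  have hcone : LipschitzWith 1 fun p => f u - 2 * t + dist p u := by
    simpa using (LipschitzWith.const (f u - 2 * t)).add (LipschitzWith.dist_left u)
  refine ⟨fun p => min (f p) (f u - 2 * t + dist p u), by simpa using hf.min hcone, ?_,
    fun p => ⟨min_le_left _ _, le_min (by linarith) ?_⟩⟩
  · have hu : min (f u) (f u - 2 * t + dist u u) = f u - 2 * t := by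
      rw [dist_self, add_zero, min_eq_right (by linarith)]
    have hv : min (f v) (f u - 2 * t + dist v u) = f u - t := by
      rw [dist_comm v u, min_eq_right (by linarith [hf_dist u v])]
      ring
    simp only [hu, hv]
    ring
  · linarith [hf_dist p u]

namespace IsLipschitzFreeSpace

variable {M : Type*} [MetricSpace M] {base : M} {X : Type*} [NormedAddCommGroup X]
  [NormedSpace ℝ X] {δ : M → X}

lemma exists_apply_molecule_eq_neg_one (hfree : IsLipschitzFreeSpace M base X δ)
    {F : X →L[ℝ] ℝ} (hF : ‖F‖ ≤ 1) {u v : M} (huv : u ≠ v) :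
    ∃ φ : X →L[ℝ] ℝ, ‖φ‖ ≤ 1 ∧ φ (molecule δ u v) = -1 ∧
      ∀ p, |φ (δ p) - F (δ p)| ≤ 2 * dist u v := by
  obtain ⟨h, hh, huv_h, hh_le⟩ :=
    (hfree.lipschitz_of_dual F hF).exists_sub_eq_neg_dist u v
  have hg : LipschitzWith 1 fun p => h p - h base := fun p q => by
    simpa [edist_sub_right] using hh p q
  obtain ⟨φ, hφ, hφδ⟩ := hfree.extend_lipschitz _ hg (sub_self _)
  refine ⟨φ, hφ, ?_, fun p => ?_⟩
  · have hd : dist u v ≠ 0 := dist_ne_zero.mpr huv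
    rw [molecule, map_smul, map_sub, hφδ, hφδ, smul_eq_mul]
    field_simp
    linarith
  · have hF_base : F (δ base) = 0 := by rw [hfree.map_base, map_zero]
    rw [hφδ, abs_le]
    constructor <;> linarith [hh_le p, hh_le base]

/-- Jung–Rueda Zoca, Theorem 2.6. -/
theorem exists_two_sub_le_norm_sub_molecule (hfree : IsLipschitzFreeSpace M base X δ)
    {μ : X} (hμ : ‖μ‖ = 1) {ε : ℝ} (hε : 0 < ε) :
    ∃ η > 0, ∀ u v, u ≠ v → dist u v < η → 2 - ε ≤ ‖μ - molecule δ u v‖ := by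
  obtain ⟨F, hF, hFμ⟩ := exists_dual_vector ℝ μ (by simp [hμ])
  have hμ_closure : μ ∈ closure (span ℝ (Set.range δ) : Set X) := by
    rw [← topologicalClosure_coe, hfree.dense_span]
    trivial
  obtain ⟨η, hη, hsmall⟩ := exists_forall_abs_apply_le_of_mem_closure_span hμ_closure 2 hε
  refine ⟨η / 2, by positivity, fun u v huv hd => ?_⟩
  obtain ⟨φ, hφ, hφm, hφF⟩ := hfree.exists_apply_molecule_eq_neg_one hF.le huv
  have hclose : |(φ - F) μ| ≤ ε := by
    refine hsmall _ ((norm_sub_le _ _).trans (by linarith)) ?_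
    rintro _ ⟨p, rfl⟩
    exact (hφF p).trans (by linarith)
  rw [sub_apply, hFμ, hμ, RCLike.ofReal_one, abs_le] at hclose
  calc 2 - ε ≤ φ (μ - molecule δ u v) := by
        rw [map_sub, hφm]
        linarith [hclose.1]
    _ ≤ ‖μ - molecule δ u v‖ := by
        simpa using (le_abs_self _).trans (φ.le_of_opNorm_le hφ (μ - molecule δ u v))

end IsLipschitzFreeSpace

/-- Proposition 4.1: if every slice of the unit ball of `F(M)`
containing `μ` contains molecules `m_{uv}` with `d(u,v)` arbitrarily small, then
`μ` is a Δ-point. -/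
theorem stmt16 {M : Type*} [MetricSpace M] (base : M)
    {X : Type*} [NormedAddCommGroup X] [NormedSpace ℝ X] (δ : M → X)
    (hfree : IsLipschitzFreeSpace M base X δ)
    (μ : X) (hμ : ‖μ‖ = 1)
    (hslice : ∀ ε : ℝ, 0 < ε → ∀ f : X →L[ℝ] ℝ, ‖f‖ = 1 →
      ∀ α : ℝ, 0 < α → f μ > 1 - α →
        ∃ u v : M, u ≠ v ∧ ‖molecule δ u v‖ ≤ 1 ∧
          f (molecule δ u v) > 1 - α ∧ dist u v < ε) :
    IsDeltaPoint μ := by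
  intro f hf α hα hfμ ε hε
  obtain ⟨η, hη, hfar⟩ := hfree.exists_two_sub_le_norm_sub_molecule hμ hε
  obtain ⟨u, v, huv, hm, hfm, hd⟩ := hslice η hη f hf α hα hfμ
  exact ⟨molecule δ u v, hm, hfm, hfar u v huv hd⟩
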